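/- arXiv:math/0609339 — 4 statements merged into one kernel-verified Lean document; each statement's English description precedes it below -/
import Mathlib

section
/- For every finite simple graph G with at least one vertex and n vertices, the number of connected components of G equals the minimum of ℓ(λ) (the number of parts of λ) over all partitions λ of n with c_λ(G) ≠ 0. -/
open SimpleGraph Finset

variable {V : Type*} {W : Type*}

open Classical in
/-- `edgeSetType A` : the "type" of the edge set `A`, i.e. the partition (as a multiset of
positive integers) of `#V` whose parts are the orders of the connected components of the
spanning subgraph `(V, A)`. -/
noncomputable def edgeSetType [Fintype V] (A : Finset (Sym2 V)) : Multiset ℕ :=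
  ((Finset.univ : Finset V).image
    (fun v => (SimpleGraph.fromEdgeSet (↑A : Set (Sym2 V))).connectedComponentMk v)).val.map
    (fun c => c.supp.ncard)

open Classical in
/-- `cCoeff G λ = Σ_{A ⊆ E(G), type(A) = λ} (−1)^{#A}`, the coefficient of the power-sum
symmetric function `p_λ` in the chromatic symmetric function `X_G`. -/
noncomputable def cCoeff [Fintype V] (G : SimpleGraph V) (lam : Multiset ℕ) : ℤ :=
  ∑ A ∈ (Finset.univ : Finset (Sym2 V)).powerset,
    if (↑A : Set (Sym2 V)) ⊆ G.edgeSet ∧ edgeSetType A = lam then (-1 : ℤ) ^ A.card else 0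

open Classical in
/-- `NCoeff G λ` : the number of edge sets `A ⊆ E(G)` with `type(A) = λ`. -/
noncomputable def NCoeff [Fintype V] (G : SimpleGraph V) (lam : Multiset ℕ) : ℕ :=
  ((Finset.univ : Finset (Sym2 V)).powerset.filter
    (fun (A : Finset (Sym2 V)) => (↑A : Set (Sym2 V)) ⊆ G.edgeSet ∧ edgeSetType A = lam)).card

/-!
Write `κ(A)` for the number of components of `(V, A)` and `E` for the edge set of `G`. For
`A ⊆ E`, `type(A)` has `κ(A) ≥ κ(E)` parts, and `type(A) = type(E)` iff `κ(A) = κ(E)`, the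
components of `(V, A)` then being those of `G`. Hence `c_λ(G) = 0` whenever `ℓ(λ) < κ(E)`,
while `c_{type(E)}(G) = Σ_{A ⊆ E, κ(A) = κ(E)} (-1)^{#A} = ± T_G(1, 0)`. That `T(1, 0) > 0`
for a loopless graph follows by deletion–contraction: `T(G) = T(G \ e) + T(G / e)` for an
ordinary edge, `T(G) = T(G / e)` for a bridge, and `T(G) = 0` if `G` has a loop; contracting a
bridge creates no loop. A contraction `G / F` is encoded by the set `F` of contracted edges, a
loop of `G / F` being an edge whose ends are already joined by `F`.
-/

namespace SimpleGraph

variable {H : SimpleGraph V} {a b x y : V}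

theorem Reachable.sup_edge_cases (h : (H ⊔ edge a b).Reachable x y) :
    H.Reachable x y ∨ H.Reachable x a ∧ H.Reachable b y ∨
      H.Reachable x b ∧ H.Reachable a y := by
  obtain ⟨p⟩ := h
  induction p with
  | nil => exact .inl .rfl
  | @cons u v w huv _ ih =>
    rcases huv with huv | huv
    · have hu := huv.reachable
      rcases ih with hvw | ⟨hva, hbw⟩ | ⟨hvb, haw⟩
      · exact .inl (hu.trans hvw)
      · exact .inr (.inl ⟨hu.trans hva, hbw⟩)
      · exact .inr (.inr ⟨hu.trans hvb, haw⟩)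
    · obtain ⟨⟨rfl, rfl⟩ | ⟨rfl, rfl⟩, -⟩ := (edge_adj ..).1 huv <;>
        rcases ih with hvw | ⟨hva, hbw⟩ | ⟨hvb, haw⟩
      · exact .inr (.inl ⟨.rfl, hvw⟩)
      · exact .inl (hva.symm.trans hbw)
      · exact .inl haw
      · exact .inr (.inr ⟨.rfl, hvw⟩)
      · exact .inl hbw
      · exact .inl (hvb.symm.trans haw)

theorem reachable_sup_edge_iff_of_reachable (hab : H.Reachable a b) :
    (H ⊔ edge a b).Reachable x y ↔ H.Reachable x y := by
  refine ⟨fun h => ?_, fun h => h.mono le_sup_left⟩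
  rcases h.sup_edge_cases with hxy | ⟨hxa, hby⟩ | ⟨hxb, hay⟩
  exacts [hxy, hxa.trans (hab.trans hby), hxb.trans (hab.symm.trans hay)]

theorem Reachable.of_sup_edge_of_not_reachable {H' : SimpleGraph V}
    (h : (H ⊔ edge a b).Reachable x y) (hn : ¬H.Reachable x y) (hle : H ≤ H')
    (hxy : H'.Reachable x y) :
    H'.Reachable a b := by
  rcases h.sup_edge_cases with hxy' | ⟨hxa, hby⟩ | ⟨hxb, hay⟩
  · exact absurd hxy' hn
  · exact (hxa.mono hle).symm.trans (hxy.trans (hby.mono hle).symm)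
  · exact (hay.mono hle).trans (hxy.symm.trans (hxb.mono hle))

theorem card_connectedComponent_sup_edge_of_reachable (hab : H.Reachable a b) :
    Nat.card (H ⊔ edge a b).ConnectedComponent = Nat.card H.ConnectedComponent := by
  refine (Nat.card_eq_of_bijective _ ⟨fun c d hcd => ?_,
    ConnectedComponent.surjective_map_ofLE (le_sup_left : H ≤ H ⊔ edge a b)⟩).symm
  induction c using ConnectedComponent.ind
  induction d using ConnectedComponent.ind
  simp only [ConnectedComponent.map_mk, ConnectedComponent.eq] at hcd ⊢
  exact (reachable_sup_edge_iff_of_reachable hab).1 hcd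

theorem card_connectedComponent_sup_edge_of_not_reachable [Finite V] (hab : ¬H.Reachable a b) :
    Nat.card H.ConnectedComponent = Nat.card (H ⊔ edge a b).ConnectedComponent + 1 := by
  set cb := H.connectedComponentMk b
  let f (c : {c : H.ConnectedComponent // c ≠ cb}) : (H ⊔ edge a b).ConnectedComponent :=
    c.1.map (Hom.ofLE le_sup_left)
  have hf : f.Bijective := by
    constructor
    · rintro ⟨c, hc⟩ ⟨d, hd⟩ hcd
      induction c using ConnectedComponent.ind with | h x
      induction d using ConnectedComponent.ind with | h y
      simp only [f, ConnectedComponent.map_mk, ConnectedComponent.eq] at hcd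
      rcases hcd.sup_edge_cases with hxy | ⟨-, hby⟩ | ⟨hxb, -⟩
      · exact Subtype.ext (ConnectedComponent.eq.2 hxy)
      · exact absurd (ConnectedComponent.eq.2 hby.symm) hd
      · exact absurd (ConnectedComponent.eq.2 hxb) hc
    · intro c
      induction c using ConnectedComponent.ind with | h x
      by_cases hxb : H.Reachable x b
      · refine ⟨⟨H.connectedComponentMk a, fun h => hab (ConnectedComponent.eq.1 h)⟩, ?_⟩
        simp only [f, ConnectedComponent.map_mk, ConnectedComponent.eq]
        have hadj : (edge a b).Adj a b :=
          (edge_adj ..).2 ⟨.inl ⟨rfl, rfl⟩, fun h => hab (h ▸ .rfl)⟩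
        exact (hadj.reachable.mono le_sup_right).trans (hxb.mono le_sup_left).symm
      · exact ⟨⟨H.connectedComponentMk x, fun h => hxb (ConnectedComponent.eq.1 h)⟩, rfl⟩
  classical
  rw [← Nat.card_eq_of_bijective f hf, ← Finite.card_option,
    Nat.card_congr (Equiv.optionSubtypeNe cb)]

theorem fromEdgeSet_insert (s : Set (Sym2 V)) (a b : V) :
    fromEdgeSet (insert s(a, b) s) = fromEdgeSet s ⊔ edge a b := by
  rw [Set.insert_eq, fromEdgeSet_union, sup_comm, edge]

end SimpleGraph

noncomputable def numComponents (s : Finset (Sym2 V)) : ℕ :=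
  Nat.card (fromEdgeSet (s : Set (Sym2 V))).ConnectedComponent

theorem numComponents_anti [Finite V] {s t : Finset (Sym2 V)} (h : s ⊆ t) :
    numComponents t ≤ numComponents s :=
  ConnectedComponent.card_le_card_of_le (fromEdgeSet_mono (coe_subset.2 h))

section SignedSums

variable [DecidableEq V] {F E : Finset (Sym2 V)} {a b : V}

theorem numComponents_insert_of_reachable (h : (fromEdgeSet (F : Set (Sym2 V))).Reachable a b) :
    numComponents (insert s(a, b) F) = numComponents F := by
  rw [numComponents, coe_insert, fromEdgeSet_insert,
    card_connectedComponent_sup_edge_of_reachable h, numComponents]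

theorem numComponents_insert_of_not_reachable [Finite V]
    (h : ¬(fromEdgeSet (F : Set (Sym2 V))).Reachable a b) :
    numComponents F = numComponents (insert s(a, b) F) + 1 := by
  rw [numComponents, numComponents, coe_insert, fromEdgeSet_insert,
    card_connectedComponent_sup_edge_of_not_reachable h]

/-- `F` is a set of contracted edges: `(V, A ∪ F) / F` has `numComponents (A ∪ F)`
components. -/
noncomputable def componentSum (F E : Finset (Sym2 V)) (k : ℕ) : ℤ :=
  ∑ A ∈ E.powerset, if numComponents (A ∪ F) = k then (-1) ^ #A else 0

theorem componentSum_empty (F : Finset (Sym2 V)) : componentSum F ∅ (numComponents F) = 1 := by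
  simp [componentSum]

theorem componentSum_insert {e : Sym2 V} (he : e ∉ E) (k : ℕ) :
    componentSum F (insert e E) k = componentSum F E k - componentSum (insert e F) E k := by
  rw [componentSum, sum_powerset_insert he, componentSum, componentSum, sub_eq_add_neg,
    ← sum_neg_distrib]
  congr 1
  refine sum_congr rfl fun A hA => ?_
  rw [card_insert_of_notMem (notMem_mono (mem_powerset.1 hA) he), insert_union, ← union_insert,
    pow_succ, apply_ite Neg.neg, neg_zero, mul_neg_one]

theorem componentSum_eq_zero_of_lt [Finite V] {k : ℕ} (hk : k < numComponents (E ∪ F)) :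
    componentSum F E k = 0 :=
  sum_eq_zero fun _ hA => if_neg ((numComponents_anti
    (union_subset_union_left (mem_powerset.1 hA))).trans_lt' hk).ne'

theorem componentSum_insert_of_reachable (h : (fromEdgeSet (F : Set (Sym2 V))).Reachable a b)
    (k : ℕ) : componentSum (insert s(a, b) F) E k = componentSum F E k := by
  refine sum_congr rfl fun _ _ => ?_
  rw [union_insert, numComponents_insert_of_reachable
    (h.mono (fromEdgeSet_mono (coe_subset.2 subset_union_right)))]

/-- The Tutte polynomial evaluation `T(1, 0)` of the graph `(V, E ∪ F) / F`. The sign is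
`(-1) ^ rank`, with the rank `κ F - κ (E ∪ F)` replaced by a sum of the same parity. -/
noncomputable def tutteOneZero (F E : Finset (Sym2 V)) : ℤ :=
  (-1) ^ (numComponents F + numComponents (E ∪ F)) * componentSum F E (numComponents (E ∪ F))

theorem tutteOneZero_empty (F : Finset (Sym2 V)) : tutteOneZero F ∅ = 1 := by
  rw [tutteOneZero, empty_union, componentSum_empty, mul_one, ← two_mul, pow_mul]
  norm_num

theorem tutteOneZero_insert_of_reachable (he : s(a, b) ∉ E)
    (h : (fromEdgeSet (F : Set (Sym2 V))).Reachable a b) :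
    tutteOneZero F (insert s(a, b) E) = 0 := by
  rw [tutteOneZero, componentSum_insert he, componentSum_insert_of_reachable h, sub_self,
    mul_zero]

theorem tutteOneZero_insert_of_not_reachable [Finite V] (he : s(a, b) ∉ E)
    (h : ¬(fromEdgeSet (F : Set (Sym2 V))).Reachable a b) :
    tutteOneZero F (insert s(a, b) E) =
      (if numComponents (E ∪ F) = numComponents (insert s(a, b) E ∪ F) then tutteOneZero F E
        else 0) + tutteOneZero (insert s(a, b) F) E := by
  set m := numComponents (insert s(a, b) E ∪ F)
  have hunion : insert s(a, b) E ∪ F = E ∪ insert s(a, b) F := by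
    rw [insert_union, union_insert]
  have hsign : (-1 : ℤ) ^ (numComponents F + m) =
      -(-1) ^ (numComponents (insert s(a, b) F) + m) := by
    rw [numComponents_insert_of_not_reachable h, add_right_comm, pow_succ, mul_neg_one]
  have hdeletion : (-1) ^ (numComponents F + m) * componentSum F E m =
      if numComponents (E ∪ F) = m then tutteOneZero F E else 0 := by
    split_ifs with hm
    · rw [tutteOneZero, hm]
    · have hlt : m < numComponents (E ∪ F) := lt_of_le_of_ne
        (numComponents_anti (union_subset_union_left (subset_insert _ _))) (Ne.symm hm)
      rw [componentSum_eq_zero_of_lt hlt, mul_zero]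
  rw [← hdeletion, tutteOneZero, tutteOneZero, ← hunion, componentSum_insert he, hsign]
  ring

theorem tutteOneZero_nonneg [Finite V] (F E : Finset (Sym2 V)) : 0 ≤ tutteOneZero F E := by
  induction E using Finset.induction_on generalizing F with
  | empty => rw [tutteOneZero_empty]; exact zero_le_one
  | insert e E he ih =>
    induction e using Sym2.ind with | h a b
    by_cases h : (fromEdgeSet (F : Set (Sym2 V))).Reachable a b
    · rw [tutteOneZero_insert_of_reachable he h]
    · rw [tutteOneZero_insert_of_not_reachable he h]
      have := ih F
      have := ih (insert s(a, b) F)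
      split_ifs <;> linarith

theorem tutteOneZero_pos [Finite V] (F E : Finset (Sym2 V))
    (hE : ∀ x y, s(x, y) ∈ E → ¬(fromEdgeSet (F : Set (Sym2 V))).Reachable x y) :
    0 < tutteOneZero F E := by
  induction E using Finset.induction_on generalizing F with
  | empty => rw [tutteOneZero_empty]; exact zero_lt_one
  | insert e E he ih =>
    induction e using Sym2.ind with | h a b
    have hE' x y (hxy : s(x, y) ∈ E) := hE x y (mem_insert_of_mem hxy)
    rw [tutteOneZero_insert_of_not_reachable he (hE a b (mem_insert_self _ _))]
    split_ifs with hbridge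
    · linarith [ih F hE', tutteOneZero_nonneg (insert s(a, b) F) E]
    · -- An edge of `E` closing a cycle through `s(a, b)` would keep `s(a, b)` from being a bridge.
      rw [zero_add]
      refine ih _ fun x y hxy hr => hbridge ?_
      have hxy' : (fromEdgeSet ((E ∪ F : Finset (Sym2 V)) : Set (Sym2 V))).Reachable x y :=
        Adj.reachable <| (fromEdgeSet_adj _).2
          ⟨mem_union_left _ hxy, fun h => hE' x y hxy (h ▸ .rfl)⟩
      rw [coe_insert, fromEdgeSet_insert] at hr
      rw [insert_union, numComponents_insert_of_reachable (hr.of_sup_edge_of_not_reachable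
        (hE' x y hxy) (fromEdgeSet_mono (coe_subset.2 subset_union_right)) hxy')]

end SignedSums

section EdgeSetType

variable [Fintype V]

theorem edgeSetType_eq_map_univ (A : Finset (Sym2 V))
    [Fintype (fromEdgeSet (A : Set (Sym2 V))).ConnectedComponent] :
    edgeSetType A = univ.val.map fun c : (fromEdgeSet (A : Set (Sym2 V))).ConnectedComponent =>
      c.supp.ncard := by
  classical
  rw [edgeSetType, image_univ_of_surjective fun c => c.exists_rep]

theorem card_edgeSetType (A : Finset (Sym2 V)) : (edgeSetType A).card = numComponents A := by
  classical
  rw [edgeSetType_eq_map_univ, Multiset.card_map, numComponents, Nat.card_eq_fintype_card]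
  rfl

theorem sum_edgeSetType (A : Finset (Sym2 V)) : (edgeSetType A).sum = Fintype.card V := by
  classical
  rw [edgeSetType_eq_map_univ, ← Finset.sum_eq_multiset_sum, Fintype.card,
    card_eq_sum_card_fiberwise fun v _ => mem_univ ((fromEdgeSet ↑A).connectedComponentMk v)]
  refine sum_congr rfl fun c _ => ?_
  rw [Set.ncard_eq_toFinset_card']
  congr 1
  ext v
  simp [ConnectedComponent.mem_supp_iff]

theorem pos_of_mem_edgeSetType {A : Finset (Sym2 V)} {i : ℕ} (hi : i ∈ edgeSetType A) :
    0 < i := by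
  classical
  rw [edgeSetType_eq_map_univ] at hi
  obtain ⟨c, -, rfl⟩ := Multiset.mem_map.1 hi
  exact (Set.ncard_pos (Set.toFinite _)).2 c.nonempty_supp

theorem edgeSetType_eq_of_numComponents_eq {A B : Finset (Sym2 V)} (hAB : A ⊆ B)
    (h : numComponents A = numComponents B) : edgeSetType A = edgeSetType B := by
  classical
  set f := ConnectedComponent.map (Hom.ofLE (fromEdgeSet_mono (coe_subset.2 hAB)))
  have hf : f.Bijective := (Nat.bijective_iff_surjective_and_card f).2
    ⟨ConnectedComponent.surjective_map_ofLE _, h⟩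
  have hsupp (c) : (f c).supp = c.supp := by
    ext x
    rw [ConnectedComponent.mem_supp_iff, ConnectedComponent.mem_supp_iff, ← hf.1.eq_iff]
    rfl
  rw [edgeSetType_eq_map_univ, edgeSetType_eq_map_univ, ← Multiset.map_univ_val_equiv
    (Equiv.ofBijective f hf), Multiset.map_map]
  exact Multiset.map_congr rfl fun c _ => congrArg Set.ncard (hsupp c).symm

end EdgeSetType

theorem numComponents_edgeFinset (G : SimpleGraph V) [Fintype G.edgeSet] :
    numComponents G.edgeFinset = Nat.card G.ConnectedComponent := by
  rw [numComponents, coe_edgeFinset, fromEdgeSet_edgeSet]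

theorem cCoeff_eq_sum_powerset_edgeFinset [Fintype V] (G : SimpleGraph V) [Fintype G.edgeSet]
    (lam : Multiset ℕ) :
    cCoeff G lam =
      ∑ A ∈ G.edgeFinset.powerset, if edgeSetType A = lam then (-1) ^ #A else 0 := by
  classical
  rw [cCoeff, ← sum_filter, ← sum_filter]
  congr 1
  ext A
  simp [← coe_subset]

theorem card_connectedComponent_le_of_cCoeff_ne_zero [Fintype V] {G : SimpleGraph V}
    {lam : Multiset ℕ} (h : cCoeff G lam ≠ 0) : Nat.card G.ConnectedComponent ≤ lam.card := by
  classical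
  rw [cCoeff_eq_sum_powerset_edgeFinset] at h
  obtain ⟨A, hA, hne⟩ := exists_ne_zero_of_sum_ne_zero h
  have htype : edgeSetType A = lam := by_contra fun h' => hne (if_neg h')
  rw [← htype, card_edgeSetType, ← numComponents_edgeFinset]
  exact numComponents_anti (mem_powerset.1 hA)

theorem cCoeff_edgeSetType_ne_zero [Fintype V] (G : SimpleGraph V) [Fintype G.edgeSet] :
    cCoeff G (edgeSetType G.edgeFinset) ≠ 0 := by
  classical
  have hsum : cCoeff G (edgeSetType G.edgeFinset) =
      componentSum ∅ G.edgeFinset (numComponents G.edgeFinset) := by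
    rw [cCoeff_eq_sum_powerset_edgeFinset, componentSum]
    refine sum_congr rfl fun A hA => if_congr ?_ rfl rfl
    rw [union_empty]
    exact ⟨fun h => by rw [← card_edgeSetType, h, card_edgeSetType],
      edgeSetType_eq_of_numComponents_eq (mem_powerset.1 hA)⟩
  have hpos := tutteOneZero_pos ∅ G.edgeFinset fun x y hxy hr => by
    rw [coe_empty, fromEdgeSet_empty, reachable_bot] at hr
    subst hr
    exact G.loopless.irrefl x (mem_edgeFinset.1 hxy)
  rw [tutteOneZero, union_empty, ← hsum] at hpos
  exact fun h => hpos.ne' (by rw [h, mul_zero])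

theorem stmt_1_general [Fintype V] (G : SimpleGraph V) :
    Nat.card G.ConnectedComponent =
      sInf {k : ℕ | ∃ lam : Multiset ℕ, lam.sum = Fintype.card V ∧ (∀ i ∈ lam, 0 < i) ∧
        cCoeff G lam ≠ 0 ∧ lam.card = k} := by
  classical
  refine (IsLeast.csInf_eq ⟨?_, ?_⟩).symm
  · exact ⟨edgeSetType G.edgeFinset, sum_edgeSetType _, fun _ => pos_of_mem_edgeSetType,
      cCoeff_edgeSetType_ne_zero G, by rw [card_edgeSetType, numComponents_edgeFinset]⟩
  · rintro k ⟨lam, -, -, hlam, rfl⟩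
    exact card_connectedComponent_le_of_cCoeff_ne_zero hlam

/-- For a finite simple graph `G` with at least one vertex, the number of connected components
of `G` equals the minimum number of parts `ℓ(λ)` over all partitions `λ` of `n = #V` with
`c_λ(G) ≠ 0`. -/
theorem stmt_1 [Fintype V] [Nonempty V] (G : SimpleGraph V) :
    Nat.card G.ConnectedComponent =
      sInf {k : ℕ | ∃ lam : Multiset ℕ, lam.sum = Fintype.card V ∧ (∀ i ∈ lam, 0 < i) ∧
        cCoeff G lam ≠ 0 ∧ lam.card = k} :=
  stmt_1_general G
end

section
/- Let T be a tree, let A ⊆ E(T) be nonempty, and let S be a subtree of T. Then A ∪ K(A) = S if and only if L(S) ⊆ A ⊆ S, where L(S) is the set of leaf edges of S. -/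
open SimpleGraph Finset

variable {V : Type*}

/-- `S` is a subtree of `T`: a nonempty set of edges of `T` such that the subgraph consisting of
the edges of `S` together with their endpoints is connected. -/
def IsSubtreeSet (T : SimpleGraph V) (S : Set (Sym2 V)) : Prop :=
  S.Nonempty ∧ S ⊆ T.edgeSet ∧
    ((SimpleGraph.fromEdgeSet S).induce {v | ∃ e ∈ S, v ∈ e}).Connected

/-- The leaf edges of an edge set `S` : edges of `S` having an endpoint incident to no other
edge of `S`. -/
def leafEdges (S : Set (Sym2 V)) : Set (Sym2 V) :=
  {e | e ∈ S ∧ ∃ v ∈ e, ∀ e' ∈ S, v ∈ e' → e' = e}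

/-- The connector `K(A)` of a (nonempty) edge set `A` of a tree `T`: the minimal subset `K` of
`E(T) \ A` such that `A ∪ K` is a subtree of `T`. -/
def connector (T : SimpleGraph V) (A : Set (Sym2 V)) : Set (Sym2 V) :=
  ⋂₀ {B | B ⊆ T.edgeSet \ A ∧ IsSubtreeSet T (A ∪ B)}

/-! For `L(S) ⊆ A ⊆ S`: by minimality `K ⊆ S \ A`, and a subtree `S'` containing `L(S)` contains
all of `S`. Otherwise fix a vertex `v` of `S'` and an edge `s(y, x)` of `S \ S'` whose endpoint `x`
is as far as possible from `v`. Then `s(y, x)` is the last edge of the tree path from `v` to `x`.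
Another edge of `S` at `x` cannot lie in `S'` (the path from `v` to `x`, last edge included,
would then lie in `S'`), and outside `S'` it can only be that same last edge, by the choice of
`x`; so `s(y, x)` is a leaf edge of `S` missing from `S'`.
Conversely, a leaf edge of `A ∪ K` outside `A` could be deleted from `K`. -/

def verts (S : Set (Sym2 V)) : Set V := {v | ∃ e ∈ S, v ∈ e}

lemma mem_of_mem_edges_fromEdgeSet {S : Set (Sym2 V)} {a b : V}
    (p : (fromEdgeSet S).Walk a b) {e : Sym2 V} (he : e ∈ p.edges) : e ∈ S :=
  ((edgeSet_fromEdgeSet S).subset (p.edges_subset_edgeSet he)).1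

lemma support_subset_verts {S : Set (Sym2 V)} {a b : V} (p : (fromEdgeSet S).Walk a b)
    (hb : b ∈ verts S) : ∀ x ∈ p.support, x ∈ verts S := by
  intro x hx
  rcases Walk.mem_support_iff_exists_mem_edges.1 hx with rfl | ⟨e, he, hxe⟩
  · exact hb
  · exact ⟨e, mem_of_mem_edges_fromEdgeSet p he, hxe⟩

lemma isSubtreeSet_iff {T : SimpleGraph V} {S : Set (Sym2 V)} :
    IsSubtreeSet T S ↔ S.Nonempty ∧ S ⊆ T.edgeSet ∧
      ∀ a ∈ verts S, ∀ b ∈ verts S, (fromEdgeSet S).Reachable a b := by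
  refine and_congr_right fun hne => and_congr_right fun _ => ?_
  rw [connected_iff]
  constructor
  · rintro ⟨hconn, -⟩ a ha b hb
    exact (hconn ⟨a, ha⟩ ⟨b, hb⟩).map (Embedding.induce _).toHom
  · intro hreach
    obtain ⟨e, he⟩ := hne
    refine ⟨fun ⟨a, ha⟩ ⟨b, hb⟩ => ?_, ⟨⟨e.out.1, e, he, Sym2.out_fst_mem e⟩⟩⟩
    obtain ⟨p⟩ := hreach a ha b hb
    exact ⟨p.induce _ (support_subset_verts p hb)⟩

namespace SimpleGraph

variable {T : SimpleGraph V}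

lemma IsAcyclic.edges_subset_of_reachable_fromEdgeSet (hT : T.IsAcyclic) {S : Set (Sym2 V)}
    (hS : S ⊆ T.edgeSet) {a b : V} (hab : (fromEdgeSet S).Reachable a b) {p : T.Walk a b}
    (hp : p.IsPath) : ∀ e ∈ p.edges, e ∈ S := by
  classical
  obtain ⟨w⟩ := hab
  let w' : T.Walk a b := w.mapLe ((fromEdgeSet_le T).2 (Set.sdiff_subset.trans hS))
  have hw' : w'.bypass = p :=
    congrArg Subtype.val ((hT.subsingleton_path a b).elim ⟨_, w'.bypass_isPath⟩ ⟨p, hp⟩)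
  intro e he
  rw [← hw'] at he
  have := w'.edges_bypass_subset_edges he
  rw [Walk.edges_mapLe_eq_edges] at this
  exact mem_of_mem_edges_fromEdgeSet w this

lemma IsTree.exists_eq_concat_of_dist_le (hT : T.IsTree) {v x y : V} (hadj : T.Adj y x)
    (hdist : T.dist v y ≤ T.dist v x) {p : T.Walk v x} (hp : p.IsPath) :
    ∃ q : T.Walk v y, p = q.concat hadj := by
  obtain ⟨q, -, hq⟩ := hT.connected.exists_path_of_dist v y
  have hlen : (q.concat hadj).length = T.dist v x := by
    rw [Walk.length_concat, hq]
    have := hT.dist_eq_dist_add_one_of_adj v hadj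
    omega
  refine ⟨q, congrArg Subtype.val ((hT.isAcyclic.subsingleton_path v x).elim ⟨p, hp⟩
    ⟨_, (q.concat hadj).isPath_of_length_eq_dist hlen⟩)⟩

end SimpleGraph

namespace IsSubtreeSet

variable {T : SimpleGraph V} {S S' : Set (Sym2 V)}

lemma reachable (hS : IsSubtreeSet T S) {a b : V} (ha : a ∈ verts S) (hb : b ∈ verts S) :
    (fromEdgeSet S).Reachable a b :=
  (isSubtreeSet_iff.1 hS).2.2 a ha b hb

lemma diff_singleton_of_mem_leafEdges (hS : IsSubtreeSet T S) {e : Sym2 V}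
    (he : e ∈ leafEdges S) (hne : (S \ {e}).Nonempty) : IsSubtreeSet T (S \ {e}) := by
  obtain ⟨-, u, hue, hleaf⟩ := he
  refine isSubtreeSet_iff.2 ⟨hne, Set.sdiff_subset.trans hS.2.1, fun a ha b hb => ?_⟩
  have hne_u : ∀ {c}, c ∈ verts (S \ {e}) → u ≠ c := by
    rintro c ⟨f, hf, hcf⟩ rfl
    exact hf.2 (hleaf f hf.1 hcf)
  have hverts : ∀ {c}, c ∈ verts (S \ {e}) → c ∈ verts S := fun ⟨f, hf, hcf⟩ => ⟨f, hf.1, hcf⟩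
  obtain ⟨p, hp⟩ := (hS.reachable (hverts ha) (hverts hb)).exists_isPath
  have hu : ((fromEdgeSet S).neighborSet u).Subsingleton := by
    intro w₁ hw₁ w₂ hw₂
    have h₁ := hleaf _ ((fromEdgeSet_adj S).1 hw₁).1 (Sym2.mem_mk_left u w₁)
    have h₂ := hleaf _ ((fromEdgeSet_adj S).1 hw₂).1 (Sym2.mem_mk_left u w₂)
    exact Sym2.congr_right.1 (h₁.trans h₂.symm)
  have hup : u ∉ p.support :=
    hp.isTrail.not_mem_support_of_subsingleton_neighborSet (hne_u ha) (hne_u hb) hu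
  refine ⟨p.transfer _ fun f hf => ?_⟩
  have hf' := p.edges_subset_edgeSet hf
  rw [edgeSet_fromEdgeSet] at hf' ⊢
  refine ⟨⟨hf'.1, ?_⟩, hf'.2⟩
  rintro rfl
  exact hup (Walk.mem_support_iff_exists_mem_edges.2 (Or.inr ⟨_, hf, hue⟩))

lemma mem_leafEdges_of_forall_dist_le (hT : T.IsTree) (hS : S ⊆ T.edgeSet)
    (hS' : IsSubtreeSet T S') {v x y : V} (hv : v ∈ verts S') (hyx : s(y, x) ∈ S \ S')
    (hfar : ∀ w ∈ verts (S \ S'), T.dist v w ≤ T.dist v x) : s(y, x) ∈ leafEdges S := by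
  have hadj : T.Adj y x := hS hyx.1
  obtain ⟨p, hp⟩ := (hT.connected v x).exists_isPath
  obtain ⟨q, rfl⟩ :=
    hT.exists_eq_concat_of_dist_le hadj (hfar y ⟨_, hyx, Sym2.mem_mk_left y x⟩) hp
  have hyx_mem : s(y, x) ∈ (q.concat hadj).edges := by simp [Walk.edges_concat]
  refine ⟨hyx.1, x, Sym2.mem_mk_right y x, fun f hf hxf => ?_⟩
  obtain ⟨w, rfl⟩ := Sym2.mem_iff_exists.1 hxf
  have hfS' : s(x, w) ∉ S' := fun h =>
    hyx.2 (hT.isAcyclic.edges_subset_of_reachable_fromEdgeSet hS'.2.1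
      (hS'.reachable hv ⟨_, h, Sym2.mem_mk_left x w⟩) hp _ hyx_mem)
  obtain ⟨q', hq'⟩ := hT.exists_eq_concat_of_dist_le (hS hf).symm
    (hfar w ⟨_, ⟨hf, hfS'⟩, Sym2.mem_mk_right x w⟩) hp
  obtain ⟨hyw, -⟩ := Walk.concat_inj hq'
  rw [hyw, Sym2.eq_swap]

lemma subset_of_leafEdges_subset [Finite V] (hT : T.IsTree) (hS : IsSubtreeSet T S)
    (hS' : IsSubtreeSet T S') (hleaf : leafEdges S ⊆ S') : S ⊆ S' := by
  by_contra hnot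
  obtain ⟨e, he⟩ := Set.sdiff_nonempty.2 hnot
  obtain ⟨e', he'⟩ := hS'.1
  obtain ⟨x, hx, hfar⟩ := Set.exists_max_image (verts (S \ S')) (T.dist e'.out.1)
    (Set.toFinite _) ⟨e.out.1, e, he, Sym2.out_fst_mem e⟩
  obtain ⟨f, hf, hxf⟩ := hx
  obtain ⟨y, rfl⟩ := Sym2.mem_iff_exists.1 hxf
  rw [Sym2.eq_swap] at hf
  exact hf.2 (hleaf (mem_leafEdges_of_forall_dist_le hT hS.2.1 hS'
    ⟨e', he', Sym2.out_fst_mem e'⟩ hf hfar))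

end IsSubtreeSet

theorem stmt_6_general [Fintype V] (T : SimpleGraph V) (hT : T.IsTree)
    (A K S : Set (Sym2 V)) (hne : A.Nonempty)
    (hK1 : K ⊆ T.edgeSet \ A) (hK2 : IsSubtreeSet T (A ∪ K))
    (hK3 : ∀ B ⊆ T.edgeSet \ A, IsSubtreeSet T (A ∪ B) → K ⊆ B)
    (hS : IsSubtreeSet T S) :
    A ∪ K = S ↔ leafEdges S ⊆ A ∧ A ⊆ S := by
  constructor
  · rintro rfl
    refine ⟨fun e he => ?_, Set.subset_union_left⟩
    by_contra heA
    have hKe : A ∪ (K \ {e}) = (A ∪ K) \ {e} := by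
      rw [Set.union_sdiff_distrib, Set.sdiff_singleton_eq_self heA]
    have hsub : IsSubtreeSet T (A ∪ (K \ {e})) := hKe ▸
      hK2.diff_singleton_of_mem_leafEdges he (hne.mono (hKe ▸ Set.subset_union_left))
    have heK : e ∈ K := he.1.resolve_left heA
    exact (hK3 _ (Set.sdiff_subset.trans hK1) hsub heK).2 rfl
  · rintro ⟨hLA, hAS⟩
    have hKS : K ⊆ S \ A := hK3 (S \ A) (Set.sdiff_subset_sdiff_left hS.2.1)
      (by rwa [Set.union_sdiff_cancel hAS])
    refine (Set.union_subset hAS fun f hf => (hKS hf).1).antisymm ?_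
    exact hS.subset_of_leafEdges_subset hT hK2 (hLA.trans Set.subset_union_left)

/-- Let `T` be a tree, `A ⊆ E(T)` nonempty, `K = K(A)` its connector (characterized by the
minimality property), and let `S` be a subtree of `T`.  Then `A ∪ K = S` if and only if
`L(S) ⊆ A ⊆ S`, where `L(S)` is the set of leaf edges of `S`. -/
theorem stmt_6 [Fintype V] (T : SimpleGraph V) (hT : T.IsTree)
    (A K S : Set (Sym2 V)) (hA : A ⊆ T.edgeSet) (hne : A.Nonempty)
    (hK1 : K ⊆ T.edgeSet \ A) (hK2 : IsSubtreeSet T (A ∪ K))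
    (hK3 : ∀ B ⊆ T.edgeSet \ A, IsSubtreeSet T (A ∪ B) → K ⊆ B)
    (hS : IsSubtreeSet T S) :
    A ∪ K = S ↔ leafEdges S ⊆ A ∧ A ⊆ S :=
  stmt_6_general T hT A K S hne hK1 hK2 hK3 hS
end

section
/- Let T be a tree and let q, r be elements of a commutative ring. Then Σ_{S} q^{#S} r^{#L(S)} = Σ_{A} (qr)^{#A} (q(1−r))^{#K(A)}, where the left sum is over all subtrees S of T and the right sum is over all nonempty subsets A ⊆ E(T). In other words, the subtree polynomial S_T(q,r) equals the connector polynomial K_T evaluated at (qr, q(1−r)). -/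
open SimpleGraph Finset

variable {V : Type*}

/-!
In a tree the subtrees are exactly the nonempty edge sets that contain the unique path between any
two of their vertices. Hence the subtrees containing a nonempty `A ⊆ E(T)` are closed under
intersection, and their intersection, the hull `H(A)`, is the least of them; it equals
`A ∪ K(A)`. For a subtree `S` we have `H(A) = S` exactly when `L(S) ⊆ A ⊆ S`: a leaf edge of `S`
outside `A` could be deleted to give a smaller subtree containing `A`, and conversely every edge of
`S` lies on the path between two leaf edges of `S`. Grouping the right-hand sum by `S = H(A)` gives
`Σ_{L(S) ⊆ A ⊆ S} (qr)^{#A} (q(1-r))^{#S-#A} = (qr)^{#L(S)} (qr + q(1-r))^{#S-#L(S)}`,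
which is `q^{#S} r^{#L(S)}`.
-/

def edgeVerts (S : Set (Sym2 V)) : Set V := {v | ∃ e ∈ S, v ∈ e}

lemma edgeVerts_mono {S S' : Set (Sym2 V)} (h : S ⊆ S') : edgeVerts S ⊆ edgeVerts S' :=
  fun _ ⟨e, he, hv⟩ => ⟨e, h he, hv⟩

namespace SimpleGraph.IsTree

variable {T : SimpleGraph V} (hT : T.IsTree)

noncomputable def treePath (u v : V) : T.Walk u v :=
  (hT.existsUnique_path u v).choose

lemma isPath_treePath (u v : V) : (hT.treePath u v).IsPath :=
  (hT.existsUnique_path u v).choose_spec.1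

variable {hT}

lemma eq_treePath {u v : V} {p : T.Walk u v} (hp : p.IsPath) : p = hT.treePath u v :=
  (hT.existsUnique_path u v).unique hp (hT.isPath_treePath u v)

lemma treePath_self (u : V) : hT.treePath u u = .nil :=
  (eq_treePath .nil).symm

lemma treePath_of_adj {u v : V} (h : T.Adj u v) : hT.treePath u v = .cons h .nil :=
  (eq_treePath (Walk.IsPath.nil.cons (by simpa using h.ne))).symm

lemma mem_edges_treePath_comm {u v : V} {e : Sym2 V} :
    e ∈ (hT.treePath u v).edges ↔ e ∈ (hT.treePath v u).edges := by
  rw [← eq_treePath (hT.isPath_treePath v u).reverse, Walk.edges_reverse, List.mem_reverse]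

lemma treePath_eq_cons {x y w : V} (h : T.Adj x y) (hy : y ∈ (hT.treePath x w).support) :
    hT.treePath x w = .cons h (hT.treePath y w) := by
  have hrev : (hT.treePath w x).reverse = hT.treePath x w :=
    eq_treePath (hT.isPath_treePath w x).reverse
  have hconcat := hT.isAcyclic.path_concat (hT.isPath_treePath w y) (hT.isPath_treePath w x)
    h.symm (by simpa [← hrev] using hy)
  rw [← hrev, hconcat, Walk.reverse_concat, eq_treePath (hT.isPath_treePath w y).reverse]

lemma notMem_edges_treePath_of_mem {x y w : V} (h : s(x, y) ∈ (hT.treePath x w).edges) :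
    s(x, y) ∉ (hT.treePath y w).edges := by
  have hadj : T.Adj x y := Walk.edges_subset_edgeSet _ h
  have hnodup := (hT.isPath_treePath x w).isTrail.edges_nodup
  rw [treePath_eq_cons hadj (Walk.snd_mem_support_of_mem_edges _ h), Walk.edges_cons] at hnodup
  exact (List.nodup_cons.mp hnodup).1

lemma notMem_edges_treePath_trans {u v w : V} {e : Sym2 V} (h₁ : e ∉ (hT.treePath u v).edges)
    (h₂ : e ∉ (hT.treePath v w).edges) : e ∉ (hT.treePath u w).edges := by
  classical
  rw [← eq_treePath ((hT.treePath u v).append (hT.treePath v w)).bypass_isPath]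
  intro he
  have := Walk.edges_bypass_subset_edges _ he
  rw [Walk.edges_append, List.mem_append] at this
  tauto

variable (hT) in
def IsPathClosed (S : Set (Sym2 V)) : Prop :=
  ∀ ⦃u⦄, u ∈ edgeVerts S → ∀ ⦃v⦄, v ∈ edgeVerts S → ∀ e ∈ (hT.treePath u v).edges, e ∈ S

variable {S : Set (Sym2 V)}

lemma isPathClosed_sInter {𝒮 : Set (Set (Sym2 V))} (h : ∀ S ∈ 𝒮, hT.IsPathClosed S) :
    hT.IsPathClosed (⋂₀ 𝒮) := fun _u hu _v hv e he S hS =>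
  h S hS (edgeVerts_mono (Set.sInter_subset_of_mem hS) hu)
    (edgeVerts_mono (Set.sInter_subset_of_mem hS) hv) e he

variable (hT) in
lemma isSubtreeSet_iff_isPathClosed :
    IsSubtreeSet T S ↔ S.Nonempty ∧ S ⊆ T.edgeSet ∧ hT.IsPathClosed S := by
  classical
  refine and_congr_right fun hne => and_congr_right fun hSE => ⟨fun hconn => ?_, fun hS => ?_⟩
  · intro u hu v hv e he
    obtain ⟨p⟩ : (fromEdgeSet S).Reachable u v :=
      (hconn.preconnected ⟨u, hu⟩ ⟨v, hv⟩).map (Embedding.induce _).toHom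
    have hpS : ∀ e ∈ p.bypass.edges, e ∈ S := fun e he => by
      have := p.bypass.edges_subset_edgeSet he
      rw [edgeSet_fromEdgeSet] at this
      exact this.1
    rw [← eq_treePath (p.bypass_isPath.transfer fun e he => hSE (hpS e he)),
      Walk.edges_transfer] at he
    exact hpS e he
  · obtain ⟨e, he⟩ := hne
    refine (connected_iff _).mpr
      ⟨fun ⟨u, hu⟩ ⟨v, hv⟩ => ?_, ⟨e.out.1, e, he, Sym2.out_fst_mem e⟩⟩
    have hp := hS hu hv
    have hsupp : ∀ x ∈ (hT.treePath u v).support, x ∈ edgeVerts S := by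
      intro x hx
      obtain rfl | ⟨e, he, hxe⟩ := Walk.mem_support_iff_exists_mem_edges.mp hx
      · exact hv
      · exact ⟨e, hp e he, hxe⟩
    let q := (hT.treePath u v).transfer (fromEdgeSet S) fun e he => by
      rw [edgeSet_fromEdgeSet]
      exact ⟨hp e he, T.not_isDiag_of_mem_edgeSet (Walk.edges_subset_edgeSet _ he)⟩
    exact ⟨q.induce _ fun x hx => hsupp x (by simpa [q] using hx)⟩

lemma mem_edges_treePath_of_mem_of_mem {u v x y : V} (hu : s(x, y) ∈ (hT.treePath u x).edges)
    (hv : s(x, y) ∈ (hT.treePath v y).edges) : s(x, y) ∈ (hT.treePath u v).edges := by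
  have hxy : T.Adj x y := Walk.edges_subset_edgeSet _ hu
  have hyu : s(x, y) ∉ (hT.treePath y u).edges :=
    notMem_edges_treePath_of_mem (mem_edges_treePath_comm.mp hu)
  have hvx : s(x, y) ∉ (hT.treePath v x).edges := by
    rw [Sym2.eq_swap] at hv ⊢
    exact mem_edges_treePath_comm.not.mp
      (notMem_edges_treePath_of_mem (mem_edges_treePath_comm.mp hv))
  by_contra huv
  apply notMem_edges_treePath_trans (notMem_edges_treePath_trans hyu huv) hvx
  simp [treePath_of_adj hxy.symm, Sym2.eq_swap]

lemma IsPathClosed.notMem_edges_treePath_of_leaf (hS : hT.IsPathClosed S) {z b u : V}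
    (hzb : s(z, b) ∈ S) (hz : ∀ e ∈ S, z ∈ e → e = s(z, b)) (hu : u ∈ edgeVerts S)
    (hzu : z ≠ u) : s(z, b) ∉ (hT.treePath b u).edges := by
  obtain ⟨c, hzc, q, hq⟩ := Walk.exists_eq_cons_of_ne hzu (hT.treePath z u)
  have hfirst : s(z, c) ∈ (hT.treePath z u).edges := by simp [hq]
  obtain rfl : c = b := Sym2.congr_right.mp
    (hz _ (hS ⟨_, hzb, Sym2.mem_mk_left _ _⟩ hu _ hfirst) (Sym2.mem_mk_left _ _))
  exact notMem_edges_treePath_of_mem hfirst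

lemma IsPathClosed.exists_leaf_beyond [Finite V] (hS : hT.IsPathClosed S) (hSE : S ⊆ T.edgeSet)
    {x y : V} (hxy : s(x, y) ∈ S) :
    ∃ u, ∃ f ∈ S, u ∈ f ∧ (∀ e ∈ S, u ∈ e → e = f) ∧ s(x, y) ∈ (hT.treePath u x).edges := by
  have hx : x ∈ edgeVerts S := ⟨_, hxy, Sym2.mem_mk_left _ _⟩
  -- `u` is a vertex beyond `xy` as far from `x` as possible; its first edge towards `x` is then
  -- its only edge in `S`, since any other one would lead to a vertex farther away.
  let C := {w | w ∈ edgeVerts S ∧ s(x, y) ∈ (hT.treePath w x).edges}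
  have hyC : y ∈ C := ⟨⟨_, hxy, Sym2.mem_mk_right _ _⟩, by
    simp [treePath_of_adj (hSE hxy).symm, Sym2.eq_swap]⟩
  obtain ⟨u, ⟨hu, hxyu⟩, hmax⟩ :=
    Set.exists_max_image C (fun w => (hT.treePath w x).length) (Set.toFinite C) ⟨y, hyC⟩
  have hux : u ≠ x := by rintro rfl; simp [treePath_self] at hxyu
  obtain ⟨w, huw, q, hq⟩ := Walk.exists_eq_cons_of_ne hux (hT.treePath u x)
  have hfirst : s(u, w) ∈ (hT.treePath u x).edges := by simp [hq]
  refine ⟨u, s(u, w), hS hu hx _ hfirst, Sym2.mem_mk_left _ _, fun e he hue => ?_, hxyu⟩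
  obtain ⟨z, rfl⟩ := Sym2.mem_iff_exists.mp hue
  have huz : T.Adj u z := hSE he
  by_cases hz : z ∈ (hT.treePath u x).support
  · have hsnd := hT.isAcyclic.eq_snd_of_adj_start (hT.isPath_treePath u x) huz hz
    rw [hq, Walk.snd_cons] at hsnd
    rw [hsnd]
  · have hzx : hT.treePath z x = .cons huz.symm (hT.treePath u x) :=
      (eq_treePath ((hT.isPath_treePath u x).cons hz)).symm
    have hlen := hmax z ⟨⟨_, he, Sym2.mem_mk_right _ _⟩, by simp [hzx, hxyu]⟩
    simp [hzx] at hlen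

end SimpleGraph.IsTree

def subtreeHull (T : SimpleGraph V) (A : Set (Sym2 V)) : Set (Sym2 V) :=
  ⋂₀ {S | IsSubtreeSet T S ∧ A ⊆ S}

section subtreeHull

variable {T : SimpleGraph V} {A S : Set (Sym2 V)}

lemma subset_subtreeHull : A ⊆ subtreeHull T A :=
  Set.subset_sInter fun _ h => h.2

lemma subtreeHull_subset (hS : IsSubtreeSet T S) (hAS : A ⊆ S) : subtreeHull T A ⊆ S :=
  Set.sInter_subset_of_mem ⟨hS, hAS⟩

lemma isSubtreeSet_edgeSet (hT : T.IsTree) (h : T.edgeSet.Nonempty) :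
    IsSubtreeSet T T.edgeSet :=
  (hT.isSubtreeSet_iff_isPathClosed).mpr
    ⟨h, subset_rfl, fun u _ v _ _ he => (hT.treePath u v).edges_subset_edgeSet he⟩

lemma isSubtreeSet_subtreeHull (hT : T.IsTree) (hA : A.Nonempty) (hAE : A ⊆ T.edgeSet) :
    IsSubtreeSet T (subtreeHull T A) :=
  (hT.isSubtreeSet_iff_isPathClosed).mpr
    ⟨hA.mono subset_subtreeHull, subtreeHull_subset (isSubtreeSet_edgeSet hT (hA.mono hAE)) hAE,
      IsTree.isPathClosed_sInter fun _ hS =>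
        ((hT.isSubtreeSet_iff_isPathClosed).mp hS.1).2.2⟩

lemma connector_eq_subtreeHull_diff (hT : T.IsTree) (hA : A.Nonempty) (hAE : A ⊆ T.edgeSet) :
    connector T A = subtreeHull T A \ A := by
  have hH := isSubtreeSet_subtreeHull hT hA hAE
  have hmem : subtreeHull T A \ A ∈ {B | B ⊆ T.edgeSet \ A ∧ IsSubtreeSet T (A ∪ B)} := by
    refine ⟨Set.sdiff_subset_sdiff_left hH.2.1, ?_⟩
    rwa [Set.union_sdiff_self, Set.union_eq_self_of_subset_left subset_subtreeHull]
  refine (Set.sInter_subset_of_mem hmem).antisymm fun e ⟨heH, heA⟩ =>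
    Set.mem_sInter.mpr fun B ⟨_, hB⟩ => ?_
  exact (subtreeHull_subset hB Set.subset_union_left heH).resolve_left heA

lemma isSubtreeSet_diff_leaf (hT : T.IsTree) (hS : IsSubtreeSet T S) {f : Sym2 V}
    (hf : f ∈ leafEdges S) (hne : (S \ {f}).Nonempty) : IsSubtreeSet T (S \ {f}) := by
  obtain ⟨-, hSE, hSc⟩ := (hT.isSubtreeSet_iff_isPathClosed).mp hS
  obtain ⟨hfS, z, hzf, hz⟩ := hf
  obtain ⟨b, rfl⟩ := Sym2.mem_iff_exists.mp hzf
  have hz_ne : ∀ {w}, w ∈ edgeVerts (S \ {s(z, b)}) → z ≠ w := by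
    rintro w ⟨e, ⟨heS, hef⟩, hwe⟩ rfl
    exact hef (hz e heS hwe)
  refine (hT.isSubtreeSet_iff_isPathClosed).mpr ⟨hne, Set.sdiff_subset.trans hSE,
    fun u hu v hv e he => ⟨hSc (edgeVerts_mono Set.sdiff_subset hu)
      (edgeVerts_mono Set.sdiff_subset hv) e he, ?_⟩⟩
  rintro rfl
  have hbu := hSc.notMem_edges_treePath_of_leaf hfS hz (edgeVerts_mono Set.sdiff_subset hu)
    (hz_ne hu)
  have hbv := hSc.notMem_edges_treePath_of_leaf hfS hz (edgeVerts_mono Set.sdiff_subset hv)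
    (hz_ne hv)
  exact IsTree.notMem_edges_treePath_trans (IsTree.mem_edges_treePath_comm.not.mp hbu) hbv he

variable [Finite V]

lemma IsSubtreeSet.leafEdges_nonempty (hT : T.IsTree) (hS : IsSubtreeSet T S) :
    (leafEdges S).Nonempty := by
  obtain ⟨⟨e, he⟩, hSE, hSc⟩ := (hT.isSubtreeSet_iff_isPathClosed).mp hS
  induction e using Sym2.ind with
  | h x y =>
    obtain ⟨u, f, hf, huf, hu, -⟩ := hSc.exists_leaf_beyond hSE he
    exact ⟨f, hf, u, huf, hu⟩

lemma subtreeHull_eq_iff (hT : T.IsTree) (hS : IsSubtreeSet T S) :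
    (A.Nonempty ∧ A ⊆ T.edgeSet) ∧ subtreeHull T A = S ↔ leafEdges S ⊆ A ∧ A ⊆ S := by
  obtain ⟨-, hSE, hSc⟩ := (hT.isSubtreeSet_iff_isPathClosed).mp hS
  constructor
  · rintro ⟨⟨hA, -⟩, rfl⟩
    refine ⟨fun f hf => ?_, subset_subtreeHull⟩
    by_contra hfA
    have hAf : A ⊆ subtreeHull T A \ {f} := fun e he =>
      ⟨subset_subtreeHull he, by rintro rfl; exact hfA he⟩
    exact (subtreeHull_subset (isSubtreeSet_diff_leaf hT hS hf (hA.mono hAf)) hAf hf.1).2 rfl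
  · rintro ⟨hLA, hAS⟩
    have hA : A.Nonempty := (hS.leafEdges_nonempty hT).mono hLA
    refine ⟨⟨hA, hAS.trans hSE⟩, (subtreeHull_subset hS hAS).antisymm fun e he => ?_⟩
    obtain ⟨-, -, hHc⟩ := (hT.isSubtreeSet_iff_isPathClosed).mp
      (isSubtreeSet_subtreeHull hT hA (hAS.trans hSE))
    induction e using Sym2.ind with
    | h x y =>
      obtain ⟨u, f, hf, huf, hu, hxyu⟩ := hSc.exists_leaf_beyond hSE he
      obtain ⟨v, g, hg, hvg, hv, hyxv⟩ := hSc.exists_leaf_beyond hSE (Sym2.eq_swap ▸ he)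
      rw [Sym2.eq_swap] at hyxv
      exact hHc ⟨f, subset_subtreeHull (hLA ⟨hf, u, huf, hu⟩), huf⟩
        ⟨g, subset_subtreeHull (hLA ⟨hg, v, hvg, hv⟩), hvg⟩ _
        (IsTree.mem_edges_treePath_of_mem_of_mem hxyu hyxv)

end subtreeHull

theorem Finset.sum_Icc_pow_mul_pow {α R : Type*} [DecidableEq α] [CommSemiring R]
    {s t : Finset α} (h : s ⊆ t) (a b : R) :
    ∑ u ∈ Icc s t, a ^ #u * b ^ (#t - #u) = a ^ #s * (a + b) ^ (#t - #s) := by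
  have hinj : Set.InjOn (s ∪ ·) (t \ s).powerset := fun u hu v hv huv => by
    rw [← union_sdiff_cancel_left (disjoint_sdiff.mono_right (mem_powerset.mp hu)),
      ← union_sdiff_cancel_left (disjoint_sdiff.mono_right (mem_powerset.mp hv))]
    exact congrArg (· \ s) huv
  rw [Icc_eq_image_powerset h, sum_image hinj, ← card_sdiff_of_subset h,
    ← sum_pow_mul_eq_add_pow, mul_sum]
  refine sum_congr rfl fun u hu => ?_
  rw [card_union_of_disjoint (disjoint_sdiff.mono_right (mem_powerset.mp hu)),
    card_sdiff_of_subset h, pow_add, mul_assoc, Nat.sub_add_eq]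

open Classical in
/-- Let `T` be a tree and `q, r` elements of a commutative ring.  Then
`Σ_S q^{#S} r^{#L(S)} = Σ_A (qr)^{#A} (q(1−r))^{#K(A)}`, where the left-hand sum is over all
subtrees `S` of `T` and the right-hand sum is over all nonempty subsets `A ⊆ E(T)`; that is,
`S_T(q,r) = K_T(qr, q(1−r))`. -/
theorem stmt_7 [Fintype V] (T : SimpleGraph V) (hT : T.IsTree)
    {R : Type*} [CommRing R] (q r : R) :
    (∑ S ∈ (Finset.univ : Finset (Sym2 V)).powerset.filter
        (fun (S : Finset (Sym2 V)) => IsSubtreeSet T (↑S : Set (Sym2 V))),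
      q ^ S.card * r ^ (leafEdges (↑S : Set (Sym2 V))).ncard) =
    ∑ A ∈ (Finset.univ : Finset (Sym2 V)).powerset.filter
        (fun (A : Finset (Sym2 V)) => A.Nonempty ∧ (↑A : Set (Sym2 V)) ⊆ T.edgeSet),
      (q * r) ^ A.card * (q * (1 - r)) ^ (connector T (↑A : Set (Sym2 V))).ncard := by
  let hull (A : Finset (Sym2 V)) : Finset (Sym2 V) := (Set.toFinite (subtreeHull T ↑A)).toFinset
  have hhull {A S : Finset (Sym2 V)} : hull A = S ↔ subtreeHull T ↑A = ↑S := by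
    simp [hull, ← Finset.coe_inj]
  refine Eq.trans (Finset.sum_congr rfl fun S hS => ?_)
    (Finset.sum_fiberwise_of_maps_to (g := hull) (fun A hA => ?_) _)
  · simp only [Finset.mem_filter, Finset.mem_powerset, Finset.subset_univ, true_and] at hS
    let L := (Set.toFinite (leafEdges (↑S : Set (Sym2 V)))).toFinset
    have hLcoe : (↑L : Set (Sym2 V)) = leafEdges ↑S := Set.Finite.coe_toFinset _
    have hLS : L ⊆ S := fun e he => by
      simpa using ((Set.Finite.mem_toFinset _).mp he).1
    calc q ^ #S * r ^ (leafEdges (↑S : Set (Sym2 V))).ncard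
        = ∑ A ∈ Finset.Icc L S, (q * r) ^ #A * (q * (1 - r)) ^ (#S - #A) := by
          rw [Finset.sum_Icc_pow_mul_pow hLS, Set.ncard_eq_toFinset_card _ (Set.toFinite _),
            show q * r + q * (1 - r) = q by ring, mul_pow, mul_right_comm, ← pow_add,
            Nat.add_sub_cancel' (Finset.card_le_card hLS)]
      _ = _ := by
        refine Finset.sum_congr (Finset.ext fun A => ?_) fun A hA => ?_
        · simp only [Finset.mem_Icc, Finset.mem_filter, Finset.mem_powerset, Finset.subset_univ,
            true_and, hhull, ← Finset.coe_nonempty]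
          rw [subtreeHull_eq_iff hT hS, ← hLcoe, Finset.coe_subset, Finset.coe_subset]
        · simp only [Finset.mem_filter, Finset.mem_powerset, Finset.subset_univ, true_and,
            hhull] at hA
          obtain ⟨⟨hAne, hAE⟩, hH⟩ := hA
          have hAS : A ⊆ S := Finset.coe_subset.mp (hH ▸ subset_subtreeHull)
          rw [connector_eq_subtreeHull_diff hT hAne hAE, hH, ← Finset.coe_sdiff,
            Set.ncard_coe_finset, Finset.card_sdiff_of_subset hAS]
  · simp only [Finset.mem_filter, Finset.mem_powerset, Finset.subset_univ, true_and] at hA ⊢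
    simpa [hull] using isSubtreeSet_subtreeHull hT hA.1 hA.2
end

section
/- Let T be a tree with n vertices, let F ⊆ E(T) be an edge set with type(F) = λ = (λ_1 ≥ … ≥ λ_ℓ), and let a ≥ 1 be an integer. Then the number of nonempty subsets A ⊆ E(T) with #A = a and A ∪ K(A) ⊆ F equals Σ_{k=1}^{ℓ} C(λ_k − 1, a), with the convention C(p,q) = 0 if q > p. -/
open SimpleGraph Finset

variable {V : Type*} {W : Type*}

/-! Every edge on the tree path between two endpoints of edges of `A` lies in every subtree
containing `A`, hence in `A ∪ K(A)`. So `A ∪ K(A) ⊆ F` exactly when all edges of `A` lie in one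
connected component of the forest `(V, F)`; conversely the edges of such a component form a subtree
containing `A`, which bounds `K(A)`. A component with `λ_k` vertices is a tree with `λ_k - 1`
edges, and the `a`-subsets of distinct components are distinct since `a ≥ 1`. -/

namespace SimpleGraph

variable {G : SimpleGraph V} {u v : V}

theorem IsAcyclic.edges_subset_of_isPath (hG : G.IsAcyclic) {p : G.Walk u v} (hp : p.IsPath)
    (q : G.Walk u v) : p.edges ⊆ q.edges := by
  classical
  have hpq : p = q.bypass :=
    congrArg Subtype.val ((hG.subsingleton_path u v).elim ⟨p, hp⟩ ⟨q.bypass, q.bypass_isPath⟩)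
  exact hpq ▸ q.edges_bypass_subset_edges

theorem IsAcyclic.reachable_fromEdgeSet_iff (hG : G.IsAcyclic) {S : Set (Sym2 V)}
    (hS : S ⊆ G.edgeSet) {p : G.Walk u v} (hp : p.IsPath) :
    (fromEdgeSet S).Reachable u v ↔ p.edgeSet ⊆ S := by
  constructor
  · rintro ⟨q⟩ e he
    have hle : fromEdgeSet S ≤ G := (fromEdgeSet_le _).2 (Set.sdiff_subset.trans hS)
    have heq := hG.edges_subset_of_isPath hp (q.mapLe hle) he
    rw [Walk.edges_mapLe_eq_edges] at heq
    exact (edgeSet_fromEdgeSet S ▸ q.edges_subset_edgeSet heq).1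
  · intro hpS
    refine ⟨p.transfer _ fun e he => ?_⟩
    rw [edgeSet_fromEdgeSet]
    exact ⟨hpS he, G.not_isDiag_of_mem_edgeSet (p.edges_subset_edgeSet he)⟩

theorem IsAcyclic.edgeSet_subset_union_connector {T : SimpleGraph V}
    (hT : T.IsAcyclic) {A : Set (Sym2 V)} (hu : ∃ e ∈ A, u ∈ e) (hv : ∃ e ∈ A, v ∈ e)
    {p : T.Walk u v} (hp : p.IsPath) : p.edgeSet ⊆ A ∪ connector T A := by
  intro e he
  refine or_iff_not_imp_left.2 fun heA B ⟨_, _, hAB, hconn⟩ => ?_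
  obtain ⟨e₁, he₁, hu₁⟩ := hu
  obtain ⟨e₂, he₂, hv₂⟩ := hv
  have hreach : (fromEdgeSet (A ∪ B)).Reachable u v :=
    (hconn.preconnected ⟨u, e₁, .inl he₁, hu₁⟩ ⟨v, e₂, .inl he₂, hv₂⟩).map
      (Embedding.induce _).toHom
  exact ((hT.reachable_fromEdgeSet_iff hAB hp).1 hreach he).resolve_left heA

end SimpleGraph

open Classical in
noncomputable def componentEdges (F : Finset (Sym2 V))
    (c : (fromEdgeSet (F : Set (Sym2 V))).ConnectedComponent) : Finset (Sym2 V) :=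
  {e ∈ F | ∀ v ∈ e, v ∈ c.supp}

section componentEdges

variable {F : Finset (Sym2 V)} {c : (fromEdgeSet (F : Set (Sym2 V))).ConnectedComponent}

theorem mem_componentEdges {e : Sym2 V} :
    e ∈ componentEdges F c ↔ e ∈ F ∧ ∀ v ∈ e, v ∈ c.supp := by
  simp [componentEdges]

theorem componentEdges_subset : componentEdges F c ⊆ F := fun _ he => (mem_componentEdges.1 he).1

theorem disjoint_componentEdges {d : (fromEdgeSet (F : Set (Sym2 V))).ConnectedComponent}
    (hcd : c ≠ d) : Disjoint (componentEdges F c) (componentEdges F d) := by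
  refine Finset.disjoint_left.2 fun e hc hd => hcd ?_
  obtain ⟨v, hv⟩ : ∃ v, v ∈ e := ⟨_, Sym2.out_fst_mem e⟩
  exact ((mem_componentEdges.1 hc).2 v hv).symm.trans ((mem_componentEdges.1 hd).2 v hv)

theorem vertices_componentEdges (hne : (componentEdges F c).Nonempty) :
    {v | ∃ e ∈ (componentEdges F c : Set (Sym2 V)), v ∈ e} = c.supp := by
  refine Set.Subset.antisymm (fun v ⟨e, he, hv⟩ => (mem_componentEdges.1 he).2 v hv) fun v hv => ?_
  obtain ⟨e₀, he₀⟩ := hne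
  obtain ⟨x, hx⟩ : ∃ x, x ∈ e₀ := ⟨_, Sym2.out_fst_mem e₀⟩
  by_cases hvx : v = x
  · exact ⟨e₀, he₀, hvx ▸ hx⟩
  -- the first edge of a walk from `v` to `x` in `(V, F)` lies in the component of `v`
  obtain ⟨w⟩ := c.reachable_of_mem_supp hv ((mem_componentEdges.1 he₀).2 x hx)
  have hadj := w.adj_snd (w.not_nil_of_ne hvx)
  refine ⟨s(v, w.snd), mem_componentEdges.2 ⟨((fromEdgeSet_adj _).1 hadj).1, ?_⟩,
    Sym2.mem_mk_left _ _⟩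
  simp only [Sym2.mem_iff, forall_eq_or_imp, forall_eq]
  exact ⟨hv, c.mem_supp_of_adj_mem_supp hv hadj⟩

theorem induce_fromEdgeSet_componentEdges :
    (fromEdgeSet (componentEdges F c : Set (Sym2 V))).induce c.supp = c.toSimpleGraph := by
  ext ⟨u, hu⟩ ⟨v, hv⟩
  rw [ConnectedComponent.mem_supp_iff] at hu hv
  simp [ConnectedComponent.toSimpleGraph, fromEdgeSet_adj, mem_componentEdges, hu, hv]

theorem isSubtreeSet_componentEdges {T : SimpleGraph V} (hF : (F : Set (Sym2 V)) ⊆ T.edgeSet)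
    (hne : (componentEdges F c).Nonempty) : IsSubtreeSet T (componentEdges F c) := by
  refine ⟨hne, fun e he => hF (componentEdges_subset he), ?_⟩
  rw [vertices_componentEdges hne, induce_fromEdgeSet_componentEdges]
  exact c.connected_toSimpleGraph

end componentEdges

theorem card_componentEdges_add_one [Fintype V] {F : Finset (Sym2 V)}
    (hF : ∀ e ∈ F, ¬e.IsDiag) (hG : (fromEdgeSet (F : Set (Sym2 V))).IsAcyclic)
    (c : (fromEdgeSet (F : Set (Sym2 V))).ConnectedComponent) :
    #(componentEdges F c) + 1 = c.supp.ncard := by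
  classical
  have hedges : componentEdges F c =
      (c.toSimpleGraph.edgeFinset.map (Function.Embedding.subtype (· ∈ c.supp)).sym2Map) := by
    rw [ConnectedComponent.toSimpleGraph]
    convert (map_edgeFinset_induce (G := fromEdgeSet (F : Set (Sym2 V))) (s := c.supp)).symm
    · ext e
      simp only [mem_componentEdges, mem_inter, mem_edgeFinset, edgeSet_fromEdgeSet, mem_sym2_iff,
        Set.mem_toFinset, Set.mem_sdiff, Finset.mem_coe, Sym2.mem_diagSet]
      exact ⟨fun h => ⟨⟨h.1, hF e h.1⟩, h.2⟩, fun h => ⟨h.1.1, h.2⟩⟩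
    · exact Iff.rfl
  rw [hedges, card_map, (hG.isTree_connectedComponent c).card_edgeFinset,
    Set.ncard_eq_toFinset_card', Set.toFinset_card]
  exact Fintype.card_congr (Equiv.refl _)

theorem union_connector_subset_iff {T : SimpleGraph V} (hT : T.IsTree) {F : Finset (Sym2 V)}
    (hF : (F : Set (Sym2 V)) ⊆ T.edgeSet) {A : Finset (Sym2 V)} (hA : A.Nonempty) :
    (A : Set (Sym2 V)) ∪ connector T A ⊆ F ↔ ∃ c, A ⊆ componentEdges F c := by
  constructor
  · intro hAF
    obtain ⟨e₀, he₀⟩ := hA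
    obtain ⟨x, hx⟩ : ∃ x, x ∈ e₀ := ⟨_, Sym2.out_fst_mem e₀⟩
    refine ⟨(fromEdgeSet (F : Set (Sym2 V))).connectedComponentMk x, fun e he =>
      mem_componentEdges.2 ⟨hAF (.inl he), fun v hv => ?_⟩⟩
    obtain ⟨p, hp⟩ : ∃ p : T.Walk v x, p.IsPath := (hT.existsUnique_path v x).exists
    have hpF : p.edgeSet ⊆ F :=
      (hT.isAcyclic.edgeSet_subset_union_connector ⟨e, he, hv⟩ ⟨e₀, he₀, hx⟩ hp).trans hAF
    exact ConnectedComponent.eq.2 ((hT.isAcyclic.reachable_fromEdgeSet_iff hF hp).2 hpF)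
  · rintro ⟨c, hAc⟩
    have hAc' : (A : Set (Sym2 V)) ⊆ componentEdges F c := coe_subset.2 hAc
    have hB : (componentEdges F c : Set (Sym2 V)) \ A ∈
        {B | B ⊆ T.edgeSet \ A ∧ IsSubtreeSet T (A ∪ B)} := by
      refine ⟨Set.sdiff_subset_sdiff_left fun e he => hF (componentEdges_subset he), ?_⟩
      rw [Set.union_sdiff_cancel hAc']
      exact isSubtreeSet_componentEdges hF (hA.mono hAc)
    calc (A : Set (Sym2 V)) ∪ connector T A ⊆ A ∪ ((componentEdges F c : Set (Sym2 V)) \ A) :=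
          Set.union_subset_union_right _ (Set.sInter_subset_of_mem hB)
      _ = componentEdges F c := Set.union_sdiff_cancel hAc'
      _ ⊆ F := coe_subset.2 componentEdges_subset

theorem Finset.disjoint_powersetCard_of_disjoint {α : Type*} {s t : Finset α} {a : ℕ}
    (ha : a ≠ 0) (hst : Disjoint s t) : Disjoint (powersetCard a s) (powersetCard a t) := by
  refine disjoint_left.2 fun A hs ht => ?_
  rw [mem_powersetCard] at hs ht
  obtain ⟨e, he⟩ := card_pos.1 (hs.2 ▸ Nat.pos_of_ne_zero ha)
  exact disjoint_left.1 hst (hs.1 he) (ht.1 he)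

open Classical in
theorem filter_union_connector_subset_eq_biUnion [Fintype V] {T : SimpleGraph V} (hT : T.IsTree)
    {F : Finset (Sym2 V)} (hF : (F : Set (Sym2 V)) ⊆ T.edgeSet) {a : ℕ} (ha : a ≠ 0) :
    (univ : Finset (Sym2 V)).powerset.filter (fun (A : Finset (Sym2 V)) => A.Nonempty ∧
        (A : Set (Sym2 V)) ⊆ T.edgeSet ∧ #A = a ∧ (A : Set (Sym2 V)) ∪ connector T A ⊆ F) =
      (univ.image (fromEdgeSet (F : Set (Sym2 V))).connectedComponentMk).biUnion
        fun c => powersetCard a (componentEdges F c) := by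
  ext A
  simp only [mem_filter, mem_powerset, subset_univ, true_and, mem_biUnion, mem_image, mem_univ,
    mem_powersetCard]
  constructor
  · rintro ⟨hA, -, rfl, hAF⟩
    obtain ⟨c, hc⟩ := (union_connector_subset_iff hT hF hA).1 hAF
    exact ⟨c, ⟨c.out, c.out_eq⟩, hc, rfl⟩
  · rintro ⟨c, -, hc, rfl⟩
    have hA : A.Nonempty := card_ne_zero.1 ha
    exact ⟨hA, fun e he => hF (componentEdges_subset (hc he)), rfl,
      (union_connector_subset_iff hT hF hA).2 ⟨c, hc⟩⟩

open Classical in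
/-- Let `T` be a tree with `n` vertices, `F ⊆ E(T)` with `type(F) = λ`, and `a ≥ 1`.  Then the
number of nonempty subsets `A ⊆ E(T)` with `#A = a` and `A ∪ K(A) ⊆ F` equals
`Σ_{k=1}^{ℓ} C(λ_k − 1, a)`. -/
theorem stmt_10 [Fintype V] (T : SimpleGraph V) (hT : T.IsTree)
    (F : Finset (Sym2 V)) (hF : (↑F : Set (Sym2 V)) ⊆ T.edgeSet)
    (lam : Multiset ℕ) (hlam : edgeSetType F = lam)
    (a : ℕ) (ha : 1 ≤ a) :
    ((Finset.univ : Finset (Sym2 V)).powerset.filter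
        (fun (A : Finset (Sym2 V)) => A.Nonempty ∧ (↑A : Set (Sym2 V)) ⊆ T.edgeSet ∧
          A.card = a ∧
          (↑A : Set (Sym2 V)) ∪ connector T (↑A : Set (Sym2 V)) ⊆ (↑F : Set (Sym2 V)))).card =
      (lam.map (fun m => (m - 1).choose a)).sum := by
  subst hlam
  have ha₀ : a ≠ 0 := Nat.one_le_iff_ne_zero.1 ha
  have hFdiag : ∀ e ∈ F, ¬e.IsDiag := fun e he => T.not_isDiag_of_mem_edgeSet (hF he)
  have hG : (fromEdgeSet (F : Set (Sym2 V))).IsAcyclic :=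
    hT.isAcyclic.anti ((fromEdgeSet_le _).2 (Set.sdiff_subset.trans hF))
  rw [filter_union_connector_subset_eq_biUnion hT hF ha₀, card_biUnion fun c _ d _ hcd =>
    disjoint_powersetCard_of_disjoint ha₀ (disjoint_componentEdges hcd), edgeSetType,
    Multiset.map_map]
  refine sum_congr rfl fun c _ => ?_
  rw [card_powersetCard, Function.comp_apply, ← card_componentEdges_add_one hFdiag hG c,
    Nat.add_sub_cancel]
end
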